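/- arXiv:1111.1486 — 6 statements merged into one kernel-verified Lean document; each statement's English description precedes it below -/
import Mathlib

section
/- Let V be a type of propositional atoms, M ⊆ V a set of atoms, n a natural number, q : Fin n → V injective, and let ψ, φ : Fin n → ((V → Prop) → Prop) and χ : (V → Prop) → Prop all be independent of M ∪ range(q). Then the following are equivalent: (a) for every valuation v with (∀ m ∈ M, v m) and (∀ i, (v (q i) → ψ i v) ∧ (¬ v (q i) → φ i v)), χ v holds; (b) for every valuation v with (∀ i, q i ∈ M → ψ i v) and (∀ i, q i ∉ M → (ψ i v ∨ φ i v)), χ v holds. -/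
/-- A map `Φ` on valuations is independent of a set `S` of atoms if its value
only depends on the atoms outside `S`. -/
def Indep {V : Type*} (S : Set V) (Φ : (V → Prop) → Prop) : Prop :=
  ∀ v w : V → Prop, (∀ x ∉ S, (v x ↔ w x)) → (Φ v ↔ Φ w)

theorem stmt_1 {V : Type*} (M : Set V) (n : ℕ) (q : Fin n → V)
    (hq : Function.Injective q)
    (ψ φ : Fin n → (V → Prop) → Prop) (χ : (V → Prop) → Prop)
    (hψ : ∀ i, Indep (M ∪ Set.range q) (ψ i))
    (hφ : ∀ i, Indep (M ∪ Set.range q) (φ i))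
    (hχ : Indep (M ∪ Set.range q) χ) :
    (∀ v : V → Prop, (∀ m ∈ M, v m) →
        (∀ i, (v (q i) → ψ i v) ∧ (¬ v (q i) → φ i v)) → χ v) ↔
    (∀ v : V → Prop, (∀ i, q i ∈ M → ψ i v) →
        (∀ i, q i ∉ M → (ψ i v ∨ φ i v)) → χ v) := by
  constructor
  · intro ha v h1 h2
    set w : V → Prop :=
      fun x => (x ∈ M ∨ ∃ i, x = q i ∧ ψ i v) ∨ (x ∉ M ∪ Set.range q ∧ v x)
      with hwdef
    have hagree : ∀ x ∉ M ∪ Set.range q, (v x ↔ w x) := by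
      intro x hx
      constructor
      · intro hvx; exact Or.inr ⟨hx, hvx⟩
      · rintro ((hM | ⟨i, rfl, _⟩) | ⟨_, hvx⟩)
        · exact absurd (Or.inl hM) hx
        · exact absurd (Or.inr ⟨i, rfl⟩) hx
        · exact hvx
    have hwq : ∀ i, w (q i) ↔ (q i ∈ M ∨ ψ i v) := by
      intro i
      constructor
      · rintro ((hM | ⟨j, hj, hψj⟩) | ⟨hx, _⟩)
        · exact Or.inl hM
        · exact Or.inr (by rwa [hq hj.symm] at hψj)
        · exact absurd (Or.inr ⟨i, rfl⟩) hx
      · rintro (hM | hpsi)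
        · exact Or.inl (Or.inl hM)
        · exact Or.inl (Or.inr ⟨i, rfl, hpsi⟩)
    have hχw : χ w := by
      apply ha w
      · intro m hm; exact Or.inl (Or.inl hm)
      · intro i
        constructor
        · intro hwi
          rcases (hwq i).mp hwi with hM | hpsi
          · exact (hψ i v w hagree).mp (h1 i hM)
          · exact (hψ i v w hagree).mp hpsi
        · intro hwi
          have hiM : q i ∉ M := fun hM => hwi ((hwq i).mpr (Or.inl hM))
          have hnpsi : ¬ ψ i v := fun hp => hwi ((hwq i).mpr (Or.inr hp))
          rcases h2 i hiM with hp | hf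
          · exact absurd hp hnpsi
          · exact (hφ i v w hagree).mp hf
    exact (hχ v w hagree).mpr hχw
  · intro hb v h1 h2
    apply hb
    · intro i hi
      exact (h2 i).1 (h1 _ hi)
    · intro i hi
      by_cases hv : v (q i)
      · exact Or.inl ((h2 i).1 hv)
      · exact Or.inr ((h2 i).2 hv)
end

section
/- Let V be a type of propositional atoms, M ⊆ V a set of atoms, n a natural number, q₁, q₂ : Fin n → V injective with range(q₁) ∩ range(q₂) = ∅, and let ψ, φ : Fin n → ((V → Prop) → Prop) and χ : (V → Prop) → Prop all be independent of M ∪ range(q₁) ∪ range(q₂). Then: (for every valuation v with (∀ m ∈ M, v m) and (∀ i, (v (q₁ i) → ψ i v) ∧ (¬ v (q₂ i) → φ i v)), χ v holds) if and only if (for every valuation v with (∀ i, q₁ i ∈ M → ψ i v), χ v holds). -/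
theorem stmt_2 {V : Type*} (M : Set V) (n : ℕ) (q₁ q₂ : Fin n → V)
    (hq₁ : Function.Injective q₁) (hq₂ : Function.Injective q₂)
    (hdisj : Set.range q₁ ∩ Set.range q₂ = ∅)
    (ψ φ : Fin n → (V → Prop) → Prop) (χ : (V → Prop) → Prop)
    (hψ : ∀ i, Indep (M ∪ Set.range q₁ ∪ Set.range q₂) (ψ i))
    (hφ : ∀ i, Indep (M ∪ Set.range q₁ ∪ Set.range q₂) (φ i))
    (hχ : Indep (M ∪ Set.range q₁ ∪ Set.range q₂) χ) :
    (∀ v : V → Prop, (∀ m ∈ M, v m) →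
        (∀ i, (v (q₁ i) → ψ i v) ∧ (¬ v (q₂ i) → φ i v)) → χ v) ↔
    (∀ v : V → Prop, (∀ i, q₁ i ∈ M → ψ i v) → χ v) := by
  set S := M ∪ Set.range q₁ ∪ Set.range q₂ with hS
  constructor
  · intro H v hv
    set w : V → Prop := fun x => x ∈ M ∨ x ∈ Set.range q₂ ∨ (x ∉ S ∧ v x) with hw
    have hagree : ∀ x ∉ S, (w x ↔ v x) := by
      intro x hx
      constructor
      · rintro (h | h | ⟨_, h⟩)
        · exact absurd (Or.inl (Or.inl h)) hx
        · exact absurd (Or.inr h) hx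
        · exact h
      · intro h; exact Or.inr (Or.inr ⟨hx, h⟩)
    have hχw : χ w ↔ χ v := hχ w v hagree
    refine hχw.mp (H w (fun m hm => Or.inl hm) ?_)
    intro i
    constructor
    · rintro (h | h | ⟨hns, _⟩)
      · exact (hψ i w v hagree).mpr (hv i h)
      · have : q₁ i ∈ Set.range q₁ ∩ Set.range q₂ := ⟨⟨i, rfl⟩, h⟩
        rw [hdisj] at this
        exact this.elim
      · exact absurd (Or.inl (Or.inr ⟨i, rfl⟩)) hns
    · intro h
      exact absurd (Or.inr (Or.inl ⟨i, rfl⟩)) h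
  · intro H v hvM hvi
    refine H v (fun i hi => (hvi i).1 (hvM _ hi))
end

section
/- Let V be a type of propositional atoms, M₁, M₂ ⊆ V with M₁ ∩ M₂ = ∅, n a natural number, q₁, q₂ : Fin n → V injective with range(q₁) ∩ range(q₂) = ∅, and let ψ, φ : Fin n → ((V → Prop) → Prop) and χ : (V → Prop) → Prop all be independent of M₁ ∪ M₂ ∪ range(q₁) ∪ range(q₂). Then: (for every valuation v with (∀ m ∈ M₁, v m), (∀ m ∈ M₂, ¬ v m), and (∀ i, (v (q₁ i) → ψ i v) ∧ (¬ v (q₂ i) → φ i v)), χ v holds) if and only if (for every valuation v with (∀ i, q₁ i ∈ M₁ → ψ i v) and (∀ i, q₂ i ∈ M₂ → φ i v), χ v holds). -/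
theorem stmt_3 {V : Type*} (M₁ M₂ : Set V) (hM : M₁ ∩ M₂ = ∅)
    (n : ℕ) (q₁ q₂ : Fin n → V)
    (hq₁ : Function.Injective q₁) (hq₂ : Function.Injective q₂)
    (hdisj : Set.range q₁ ∩ Set.range q₂ = ∅)
    (ψ φ : Fin n → (V → Prop) → Prop) (χ : (V → Prop) → Prop)
    (hψ : ∀ i, Indep (M₁ ∪ M₂ ∪ Set.range q₁ ∪ Set.range q₂) (ψ i))
    (hφ : ∀ i, Indep (M₁ ∪ M₂ ∪ Set.range q₁ ∪ Set.range q₂) (φ i))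
    (hχ : Indep (M₁ ∪ M₂ ∪ Set.range q₁ ∪ Set.range q₂) χ) :
    (∀ v : V → Prop, (∀ m ∈ M₁, v m) → (∀ m ∈ M₂, ¬ v m) →
        (∀ i, (v (q₁ i) → ψ i v) ∧ (¬ v (q₂ i) → φ i v)) → χ v) ↔
    (∀ v : V → Prop, (∀ i, q₁ i ∈ M₁ → ψ i v) →
        (∀ i, q₂ i ∈ M₂ → φ i v) → χ v) := by
  constructor
  · intro H v h1 h2
    set S := M₁ ∪ M₂ ∪ Set.range q₁ ∪ Set.range q₂ with hS
    set w : V → Prop := fun x =>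
      x ∈ M₁ ∨ (x ∉ M₂ ∧ x ∉ Set.range q₁ ∧ (x ∈ Set.range q₂ ∨ v x)) with hw
    have hagree : ∀ x ∉ S, (v x ↔ w x) := by
      intro x hx
      simp only [hS, Set.mem_union, not_or] at hx
      obtain ⟨⟨⟨h₁, h₂⟩, h₃⟩, h₄⟩ := hx
      simp [hw, h₁, h₂, h₃, h₄]
      tauto
    have hχv := hχ v w hagree
    rw [hχv]
    apply H w
    · intro m hm; exact Or.inl hm
    · intro m hm hwm
      rcases hwm with h | ⟨h, _⟩
      · exact Set.eq_empty_iff_forall_notMem.mp hM m ⟨h, hm⟩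
      · exact h hm
    · intro i
      constructor
      · intro hwq
        rcases hwq with h | ⟨_, h, _⟩
        · exact ((hψ i) v w hagree).mp (h1 i h)
        · exact absurd ⟨i, rfl⟩ h
      · intro hwq
        have hq2M2 : q₂ i ∈ M₂ := by
          by_contra hc
          apply hwq
          right
          refine ⟨hc, ?_, Or.inl ⟨i, rfl⟩⟩
          intro hr1
          exact Set.eq_empty_iff_forall_notMem.mp hdisj _ ⟨hr1, ⟨i, rfl⟩⟩
        exact ((hφ i) v w hagree).mp (h2 i hq2M2)
  · intro H v hv1 hv2 hv3
    apply H v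
    · intro i hi; exact (hv3 i).1 (hv1 _ hi)
    · intro i hi; exact (hv3 i).2 (hv2 _ hi)
end

section
/- Let K = (O, P) be a dl-program. Then: (i) if I ⊆ HB_P is a weak answer set of K, then π*(I) is a weak answer set of π*(K); (ii) if I* ⊆ HB_{π*(P)} is a weak answer set of π*(K), then I* ∩ HB_P is a weak answer set of K. -/
/-!
A formalization of description logic programs (dl-programs) in the sense of
Eiter et al., over an abstract classical first-order semantics, together with
the translations π, π*, π', σ, τ, τ', τ* and the various answer-set semantics
(weak / strong answer sets, weakly / strongly well-supported answer sets) and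
Reiter's default logic.
-/

namespace DLP

attribute [local instance] Classical.propDecidable

noncomputable section

/-! ### A minimal classical first-order logic with equality -/

/-- A relational first-order signature: relation symbols with arities,
and constant symbols (no proper function symbols). -/
structure Sig : Type 1 where
  Rel : Type
  arity : Rel → ℕ
  Const : Type

/-- First-order terms: (named) variables and constants. -/
inductive Term (σ : Sig) : Type where
  | var : ℕ → Term σ
  | const : σ.Const → Term σ

/-- First-order formulas over a signature, with (true) equality. -/
inductive Fml (σ : Sig) : Type where
  | rel : (R : σ.Rel) → (Fin (σ.arity R) → Term σ) → Fml σ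
  | eq : Term σ → Term σ → Fml σ
  | falsum : Fml σ
  | imp : Fml σ → Fml σ → Fml σ
  | all : ℕ → Fml σ → Fml σ

namespace Fml
variable {σ : Sig}

def not (f : Fml σ) : Fml σ := f.imp .falsum

def verum : Fml σ := Fml.not .falsum

def and (f g : Fml σ) : Fml σ := Fml.not (f.imp g.not)

/-- Finite (syntactic) conjunction. -/
def conjList (l : List (Fml σ)) : Fml σ := l.foldr Fml.and verum

end Fml

/-- A first-order structure: a nonempty domain together with interpretations
of the constant and relation symbols. -/
structure Struc (σ : Sig) : Type 1 where
  Dom : Type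
  dne : Nonempty Dom
  cI : σ.Const → Dom
  rI : (R : σ.Rel) → (Fin (σ.arity R) → Dom) → Prop

/-- Value of a term in a structure under a variable assignment. -/
def Term.val {σ : Sig} (M : Struc σ) (env : ℕ → M.Dom) : Term σ → M.Dom
  | .var n => env n
  | .const c => M.cI c

/-- Tarskian satisfaction. -/
def Fml.Sat {σ : Sig} (M : Struc σ) : (ℕ → M.Dom) → Fml σ → Prop
  | env, .rel R ts => M.rI R fun i => (ts i).val M env
  | env, .eq t u => t.val M env = u.val M env
  | _, .falsum => False
  | env, .imp f g => f.Sat M env → g.Sat M env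
  | env, .all n f => ∀ d : M.Dom, f.Sat M (Function.update env n d)

/-- A structure models a formula if it satisfies it under every assignment. -/
def Struc.models {σ : Sig} (M : Struc σ) (φ : Fml σ) : Prop := ∀ env, φ.Sat M env

def Struc.modelsSet {σ : Sig} (M : Struc σ) (Γ : Set (Fml σ)) : Prop := ∀ φ ∈ Γ, M.models φ

/-- Classical first-order entailment `Γ ⊨ φ`. -/
def Entails {σ : Sig} (Γ : Set (Fml σ)) (φ : Fml σ) : Prop :=
  ∀ M : Struc σ, M.modelsSet Γ → M.models φ

/-- Satisfiability of a set of sentences. -/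
def SatSet {σ : Sig} (Γ : Set (Fml σ)) : Prop := ∃ M : Struc σ, M.modelsSet Γ

/-- `Th Γ` is the set of classical consequences of `Γ`. -/
def Th {σ : Sig} (Γ : Set (Fml σ)) : Set (Fml σ) := { φ | Entails Γ φ }

/-- The relation symbols occurring in a formula. -/
def Fml.RelIn {σ : Sig} : Fml σ → Set σ.Rel
  | .rel R _ => {R}
  | .eq _ _ => ∅
  | .falsum => ∅
  | .imp f g => f.RelIn ∪ g.RelIn
  | .all _ f => f.RelIn

/-- Arity-preserving signature morphisms. -/
structure SigHom (σ τ : Sig) where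
  onRel : σ.Rel → τ.Rel
  har : ∀ R, τ.arity (onRel R) = σ.arity R
  onConst : σ.Const → τ.Const

def Term.map {σ τ : Sig} (h : SigHom σ τ) : Term σ → Term τ
  | .var n => .var n
  | .const c => .const (h.onConst c)

def Fml.map {σ τ : Sig} (h : SigHom σ τ) : Fml σ → Fml τ
  | .rel R ts => .rel (h.onRel R) fun i => (ts (Fin.cast (h.har R) i)).map h
  | .eq t u => .eq (t.map h) (u.map h)
  | .falsum => .falsum
  | .imp f g => .imp (f.map h) (g.map h)
  | .all n f => .all n (f.map h)

/-! ### Dl-programs -/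

/-- The vocabulary of a dl-program: ontology relation symbols, program
predicate symbols (disjoint from the former), and a finite nonempty set of
constant symbols. -/
structure DLSig : Type 1 where
  Rel : Type
  rArity : Rel → ℕ
  PP : Type
  pArity : PP → ℕ
  Const : Type
  cne : Nonempty Const
  cfin : Fintype Const

instance (S : DLSig) : Nonempty S.Const := S.cne
instance (S : DLSig) : Fintype S.Const := S.cfin

/-- The combined first-order signature of ontology relations and program
predicates. -/
def DLSig.fol (S : DLSig) : Sig :=
  ⟨S.Rel ⊕ S.PP, Sum.elim S.rArity S.pArity, S.Const⟩

/-- A ground program atom `p(c⃗)`. -/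
structure PAtom (S : DLSig) where
  p : S.PP
  args : Fin (S.pArity p) → S.Const

/-- A program atom as a first-order sentence. -/
def PAtom.fml {S : DLSig} (a : PAtom S) : Fml S.fol :=
  .rel (Sum.inr a.p) fun i => .const (a.args i)

/-- An entry `S op p` of the input list of a dl-atom: `S` is an ontology
relation symbol or a negated one (flag `neg`), `op` is `⊕` (`plus = true`) or
the constraint operator `⊖` (`plus = false`), and `p` is a program predicate
of the same arity. -/
structure DLEntry (S : DLSig) where
  n : ℕ
  R : S.Rel
  hR : S.rArity R = n
  neg : Bool
  plus : Bool
  p : S.PP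
  hp : S.pArity p = n

/-- The ground literal `S(e⃗)` (possibly negated) for an entry. -/
def DLEntry.lit {S : DLSig} (en : DLEntry S) (e : Fin en.n → S.Const) : Fml S.fol :=
  let base : Fml S.fol := .rel (Sum.inl en.R) fun i => .const (e (Fin.cast en.hR i))
  if en.neg then base.not else base

/-- The ground program atom `p(e⃗)` for an entry. -/
def DLEntry.patom {S : DLSig} (en : DLEntry S) (e : Fin en.n → S.Const) : PAtom S :=
  ⟨en.p, fun i => e (Fin.cast en.hp i)⟩

/-- The input `A_i(I)` contributed by the entry under interpretation `I`:
`{S(e⃗) : p(e⃗) ∈ I}` for `⊕`, and `{¬S(e⃗) : p(e⃗) ∉ I}` for `⊖`. -/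
def DLEntry.input {S : DLSig} (en : DLEntry S) (I : Set (PAtom S)) : Set (Fml S.fol) :=
  if en.plus then { φ | ∃ e, en.patom e ∈ I ∧ φ = en.lit e }
  else { φ | ∃ e, en.patom e ∉ I ∧ φ = (en.lit e).not }

/-- A ground dl-atom `DL[S₁ op₁ p₁, …, S_m op_m p_m; Q](t⃗)`, with `Q(t⃗)` a
sentence of the ontology language. -/
structure DLAtom (S : DLSig) where
  entries : List (DLEntry S)
  Q : Fml S.fol

/-- Satisfaction of a dl-atom: `I ⊨_O A` iff `O(I;λ) ⊨ Q(t⃗)`. -/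
def SatDL {S : DLSig} (O : Set (Fml S.fol)) (I : Set (PAtom S)) (A : DLAtom S) : Prop :=
  Entails (O ∪ ⋃ en ∈ A.entries, en.input I) A.Q

/-- A body element of a dl-rule: a program atom or a dl-atom. -/
inductive BElem (S : DLSig) where
  | atom : PAtom S → BElem S
  | dl : DLAtom S → BElem S

/-- A dl-rule `head ← pos, not neg`. -/
structure Rule (S : DLSig) where
  head : PAtom S
  pos : List (BElem S)
  neg : List (BElem S)

/-- Satisfaction of a body element. -/
def SatB {S : DLSig} (O : Set (Fml S.fol)) (I : Set (PAtom S)) : BElem S → Prop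
  | .atom a => a ∈ I
  | .dl A => SatDL O I A

/-- The program predicates occurring in a body element (including the input
predicates of dl-atoms). -/
def BElem.preds {S : DLSig} : BElem S → Set S.PP
  | .atom a => {a.p}
  | .dl A => { q | ∃ en ∈ A.entries, en.p = q }

/-- The program predicates occurring in a rule. -/
def Rule.preds {S : DLSig} (r : Rule S) : Set S.PP :=
  {r.head.p} ∪ (⋃ b ∈ r.pos, b.preds) ∪ (⋃ b ∈ r.neg, b.preds)

/-- The Herbrand base of a program: all ground atoms built from program
predicates occurring in `P` and the constants. -/
def HB {S : DLSig} (P : Set (Rule S)) : Set (PAtom S) :=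
  { a | ∃ r ∈ P, a.p ∈ r.preds }

/-- The dl-atoms occurring in `P`. -/
def DLatoms {S : DLSig} (P : Set (Rule S)) : Set (DLAtom S) :=
  { A | ∃ r ∈ P, BElem.dl A ∈ r.pos ∨ BElem.dl A ∈ r.neg }

/-- A dl-atom is monotonic relative to `K = (O,P)`. -/
def Monotonic {S : DLSig} (O : Set (Fml S.fol)) (P : Set (Rule S)) (A : DLAtom S) : Prop :=
  ∀ ⦃I I' : Set (PAtom S)⦄, I ⊆ I' → I' ⊆ HB P → SatDL O I A → SatDL O I' A

/-- A formula of the ontology language: no program predicate occurs in it. -/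
def OntoFml {S : DLSig} (φ : Fml S.fol) : Prop := ∀ p : S.PP, Sum.inr p ∉ φ.RelIn

/-- The immediate-consequence operator of a positive program. -/
def gamma {S : DLSig} (O : Set (Fml S.fol)) (P : Set (Rule S)) (I : Set (PAtom S)) :
    Set (PAtom S) :=
  { a | ∃ r ∈ P, r.head = a ∧ ∀ b ∈ r.pos, SatB O I b }

def gammaIter {S : DLSig} (O : Set (Fml S.fol)) (P : Set (Rule S)) : ℕ → Set (PAtom S)
  | 0 => ∅
  | k + 1 => gamma O P (gammaIter O P k)

/-- The least fixpoint of `γ`, as the union of its iterates from `∅`. -/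
def lfpGamma {S : DLSig} (O : Set (Fml S.fol)) (P : Set (Rule S)) : Set (PAtom S) :=
  ⋃ k, gammaIter O P k

/-- The strong dl-transform `sP_O^I`. -/
def sReduct {S : DLSig} (O : Set (Fml S.fol)) (P : Set (Rule S)) (I : Set (PAtom S)) :
    Set (Rule S) :=
  { r' | ∃ r ∈ P,
      (∀ A : DLAtom S, BElem.dl A ∈ r.pos → ¬ Monotonic O P A → SatDL O I A) ∧
      (∀ b ∈ r.neg, ¬ SatB O I b) ∧
      r' = ⟨r.head,
            r.pos.filter fun b => decide (match b with
              | .atom _ => True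
              | .dl A => Monotonic O P A), []⟩ }

/-- The weak dl-transform `wP_O^I`. -/
def wReduct {S : DLSig} (O : Set (Fml S.fol)) (P : Set (Rule S)) (I : Set (PAtom S)) :
    Set (Rule S) :=
  { r' | ∃ r ∈ P,
      (∀ A : DLAtom S, BElem.dl A ∈ r.pos → SatDL O I A) ∧
      (∀ b ∈ r.neg, ¬ SatB O I b) ∧
      r' = ⟨r.head,
            r.pos.filter fun b => decide (∃ a, b = BElem.atom a), []⟩ }

/-- `I` is a strong answer set of `K = (O,P)`. -/
def StrongAS {S : DLSig} (O : Set (Fml S.fol)) (P : Set (Rule S)) (I : Set (PAtom S)) : Prop :=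
  I = lfpGamma O (sReduct O P I)

/-- `I` is a weak answer set of `K = (O,P)`. -/
def WeakAS {S : DLSig} (O : Set (Fml S.fol)) (P : Set (Rule S)) (I : Set (PAtom S)) : Prop :=
  I = lfpGamma O (wReduct O P I)

end

end DLP
namespace DLP
noncomputable section
attribute [local instance] Classical.propDecidable

/-! ### The translation π (and π*) eliminating the constraint operator -/

variable {S : DLSig}

/-- The signature of `π(K)`: fresh predicates `π_p` (second summand) and fresh
propositional atoms `π_B` indexed by dl-atoms (third summand). -/
def piSig (S : DLSig) : DLSig where
  Rel := S.Rel
  rArity := S.rArity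
  PP := S.PP ⊕ (S.PP ⊕ DLAtom S)
  pArity := Sum.elim S.pArity (Sum.elim S.pArity fun _ => 0)
  Const := S.Const
  cne := S.cne
  cfin := S.cfin

def piHom (S : DLSig) : SigHom S.fol (piSig S).fol :=
  ⟨Sum.map id Sum.inl, fun R => by cases R <;> rfl, id⟩

def embA {S : DLSig} (a : PAtom S) : PAtom (piSig S) := ⟨Sum.inl a.p, a.args⟩

def embEntry (en : DLEntry S) : DLEntry (piSig S) :=
  ⟨en.n, en.R, en.hR, en.neg, en.plus, Sum.inl en.p, en.hp⟩

/-- A dl-atom, embedded unchanged. -/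
def embDL (A : DLAtom S) : DLAtom (piSig S) :=
  ⟨A.entries.map embEntry, A.Q.map (piHom S)⟩

/-- `π(λ)`: replace each `S ⊖ p` by `¬S ⊕ π_p`. -/
def piEntry (en : DLEntry S) : DLEntry (piSig S) :=
  if en.plus then embEntry en
  else ⟨en.n, en.R, en.hR, !en.neg, true, Sum.inr (Sum.inl en.p), en.hp⟩

def piDL (A : DLAtom S) : DLAtom (piSig S) :=
  ⟨A.entries.map piEntry, A.Q.map (piHom S)⟩

/-- The fresh propositional atom `π_B`. -/
def piBAtom (B : DLAtom S) : PAtom (piSig S) :=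
  ⟨Sum.inr (Sum.inr B), fun i => i.elim0⟩

/-- The fresh atom `π_p(e⃗)`. -/
def piPAtom (p : S.PP) (e : Fin (S.pArity p) → S.Const) : PAtom (piSig S) :=
  ⟨Sum.inr (Sum.inl p), e⟩

/-- `π(B)` for a positive body element (the part that stays positive). -/
def piPos (O : Set (Fml S.fol)) (P : Set (Rule S)) : BElem S → Option (BElem (piSig S))
  | .atom a => some (.atom (embA a))
  | .dl B => if Monotonic O P B then some (.dl (embDL B)) else none

/-- `π(B)` for a positive body element (the part moved under `not`). -/
def piPosNeg (O : Set (Fml S.fol)) (P : Set (Rule S)) : BElem S → Option (BElem (piSig S))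
  | .dl B => if Monotonic O P B then none else some (.atom (piBAtom B))
  | _ => none

/-- `π(not B)` for a negative body element. -/
def piNeg : BElem S → BElem (piSig S)
  | .atom a => .atom (embA a)
  | .dl B => .dl (piDL B)

/-- The main rule (i) of `π(r)`. -/
def piRuleMain (O : Set (Fml S.fol)) (P : Set (Rule S)) (r : Rule S) : Rule (piSig S) :=
  ⟨embA r.head, r.pos.filterMap (piPos O P),
    r.pos.filterMap (piPosNeg O P) ++ r.neg.map piNeg⟩

/-- `S ⊖ p` occurs in the dl-atom `A`. -/
def ominusIn (A : DLAtom S) (p : S.PP) : Prop :=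
  ∃ en ∈ A.entries, en.plus = false ∧ en.p = p

/-- The program `π(P)`. -/
def piProg (O : Set (Fml S.fol)) (P : Set (Rule S)) : Set (Rule (piSig S)) :=
  (⋃ r ∈ P, {piRuleMain O P r}) ∪
  { r' | ∃ r ∈ P, ∃ B, BElem.dl B ∈ r.pos ∧ ¬ Monotonic O P B ∧
      r' = ⟨piBAtom B, [], [.dl (piDL B)]⟩ } ∪
  { r' | ∃ r ∈ P, ∃ B, (BElem.dl B ∈ r.pos ∨ BElem.dl B ∈ r.neg) ∧ ¬ Monotonic O P B ∧
      ∃ p, ominusIn B p ∧ ∃ e, r' = ⟨piPAtom p e, [], [.atom (embA ⟨p, e⟩)]⟩ }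

/-- The ontology, over the extended signature. -/
def piO (O : Set (Fml S.fol)) : Set (Fml (piSig S).fol) := Fml.map (piHom S) '' O

/-- `π₁(I) = {π_p(c⃗) ∈ HB_{π(P)} : p(c⃗) ∉ I}`. -/
def pi1 (O : Set (Fml S.fol)) (P : Set (Rule S)) (I : Set (PAtom S)) :
    Set (PAtom (piSig S)) :=
  { a | ∃ p e, a = piPAtom p e ∧ a ∈ HB (piProg O P) ∧ (⟨p, e⟩ : PAtom S) ∉ I }

/-- `π₂(I) = {π_B ∈ HB_{π(P)} : B ∈ DL_P^? and I ⊭_O B}`. -/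
def pi2 (O : Set (Fml S.fol)) (P : Set (Rule S)) (I : Set (PAtom S)) :
    Set (PAtom (piSig S)) :=
  { a | ∃ B ∈ DLatoms P, ¬ Monotonic O P B ∧ ¬ SatDL O I B ∧
      a = piBAtom B ∧ a ∈ HB (piProg O P) }

/-- `π(I) = I ∪ π₁(I) ∪ π₂(I)`. -/
def piSet (O : Set (Fml S.fol)) (P : Set (Rule S)) (I : Set (PAtom S)) :
    Set (PAtom (piSig S)) :=
  (embA '' I) ∪ pi1 O P I ∪ pi2 O P I

/-! The translation π*, which treats every dl-atom the way π treats
nonmonotonic dl-atoms. -/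

def piStarPos : BElem S → Option (BElem (piSig S))
  | .atom a => some (.atom (embA a))
  | .dl _ => none

def piStarPosNeg : BElem S → Option (BElem (piSig S))
  | .dl B => some (.atom (piBAtom B))
  | _ => none

def piStarRuleMain (r : Rule S) : Rule (piSig S) :=
  ⟨embA r.head, r.pos.filterMap piStarPos,
    r.pos.filterMap piStarPosNeg ++ r.neg.map piNeg⟩

/-- The program `π*(P)`. -/
def piStarProg (P : Set (Rule S)) : Set (Rule (piSig S)) :=
  (⋃ r ∈ P, {piStarRuleMain r}) ∪
  { r' | ∃ r ∈ P, ∃ B, BElem.dl B ∈ r.pos ∧ r' = ⟨piBAtom B, [], [.dl (piDL B)]⟩ } ∪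
  { r' | ∃ r ∈ P, ∃ B, (BElem.dl B ∈ r.pos ∨ BElem.dl B ∈ r.neg) ∧
      ∃ p, ominusIn B p ∧ ∃ e, r' = ⟨piPAtom p e, [], [.atom (embA ⟨p, e⟩)]⟩ }

/-- `π*(I)`. -/
def piStarSet (O : Set (Fml S.fol)) (P : Set (Rule S)) (I : Set (PAtom S)) :
    Set (PAtom (piSig S)) :=
  (embA '' I) ∪
  { a | ∃ p e, a = piPAtom p e ∧ a ∈ HB (piStarProg P) ∧ (⟨p, e⟩ : PAtom S) ∉ I } ∪
  { a | ∃ B ∈ DLatoms P, ¬ SatDL O I B ∧ a = piBAtom B ∧ a ∈ HB (piStarProg P) }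

end
end DLP
namespace DLP
noncomputable section
attribute [local instance] Classical.propDecidable

variable {S : DLSig}

/-! ### The translation π' of Eiter et al. (well-founded semantics paper) -/

/-- The signature of `π'(K)`: fresh ontology relation symbols `S'_p` and fresh
program predicates `p̄`, one of each for every program predicate `p`. -/
def piPrimeSig (S : DLSig) : DLSig where
  Rel := S.Rel ⊕ S.PP
  rArity := Sum.elim S.rArity S.pArity
  PP := S.PP ⊕ S.PP
  pArity := Sum.elim S.pArity S.pArity
  Const := S.Const
  cne := S.cne
  cfin := S.cfin

def piPrimeHom (S : DLSig) : SigHom S.fol (piPrimeSig S).fol :=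
  ⟨Sum.map Sum.inl Sum.inl, fun R => by cases R <;> rfl, id⟩

def embA' (a : PAtom S) : PAtom (piPrimeSig S) := ⟨Sum.inl a.p, a.args⟩

/-- The fresh atom `p̄(e⃗)`. -/
def barA (p : S.PP) (e : Fin (S.pArity p) → S.Const) : PAtom (piPrimeSig S) :=
  ⟨Sum.inr p, e⟩

/-- Replace `S ⊖ p` by `¬S ⊕ p̄` in an input entry. -/
def piPrimeEntry (en : DLEntry S) : DLEntry (piPrimeSig S) :=
  if en.plus then ⟨en.n, Sum.inl en.R, en.hR, en.neg, true, Sum.inl en.p, en.hp⟩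
  else ⟨en.n, Sum.inl en.R, en.hR, !en.neg, true, Sum.inr en.p, en.hp⟩

def piPrimeDL (A : DLAtom S) : DLAtom (piPrimeSig S) :=
  ⟨A.entries.map piPrimeEntry, A.Q.map (piPrimeHom S)⟩

def piPrimeB : BElem S → BElem (piPrimeSig S)
  | .atom a => .atom (embA' a)
  | .dl A => .dl (piPrimeDL A)

def piPrimeRule (r : Rule S) : Rule (piPrimeSig S) :=
  ⟨embA' r.head, r.pos.map piPrimeB, r.neg.map piPrimeB⟩

/-- The auxiliary dl-atom `DL[S'_p ⊕ p; S'_p](e⃗)`. -/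
def auxDL (p : S.PP) (e : Fin (S.pArity p) → S.Const) : DLAtom (piPrimeSig S) :=
  ⟨[⟨S.pArity p, Sum.inr p, rfl, false, true, Sum.inl p, rfl⟩],
   Fml.rel (σ := (piPrimeSig S).fol) (Sum.inl (Sum.inr p)) fun i => .const (e i)⟩

/-- The program `π'(P)`. -/
def piPrimeProg (P : Set (Rule S)) : Set (Rule (piPrimeSig S)) :=
  (⋃ r ∈ P, {piPrimeRule r}) ∪
  { r' | ∃ p : S.PP, (∃ A ∈ DLatoms P, ominusIn A p) ∧
      ∃ e, r' = ⟨barA p e, [], [.dl (auxDL p e)]⟩ }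

def piPrimeO (O : Set (Fml S.fol)) : Set (Fml (piPrimeSig S).fol) :=
  Fml.map (piPrimeHom S) '' O

/-! ### The translation σ making all dl-atoms occur negatively -/

/-- The signature of `σ(K)`: a fresh propositional atom `σ_B` for every
dl-atom `B`. -/
def sigmaSig (S : DLSig) : DLSig where
  Rel := S.Rel
  rArity := S.rArity
  PP := S.PP ⊕ DLAtom S
  pArity := Sum.elim S.pArity fun _ => 0
  Const := S.Const
  cne := S.cne
  cfin := S.cfin

def sigmaHom (S : DLSig) : SigHom S.fol (sigmaSig S).fol :=
  ⟨Sum.map id Sum.inl, fun R => by cases R <;> rfl, id⟩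

def sigmaEmbA (a : PAtom S) : PAtom (sigmaSig S) := ⟨Sum.inl a.p, a.args⟩

def sigmaBAtom (B : DLAtom S) : PAtom (sigmaSig S) := ⟨Sum.inr B, fun i => i.elim0⟩

def sigmaEmbEntry (en : DLEntry S) : DLEntry (sigmaSig S) :=
  ⟨en.n, en.R, en.hR, en.neg, en.plus, Sum.inl en.p, en.hp⟩

def sigmaEmbDL (A : DLAtom S) : DLAtom (sigmaSig S) :=
  ⟨A.entries.map sigmaEmbEntry, A.Q.map (sigmaHom S)⟩

def sigmaEmbB : BElem S → BElem (sigmaSig S)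
  | .atom a => .atom (sigmaEmbA a)
  | .dl A => .dl (sigmaEmbDL A)

def sigmaRule (r : Rule S) : Rule (sigmaSig S) :=
  ⟨sigmaEmbA r.head,
   r.pos.filterMap fun b => match b with
     | .atom a => some (.atom (sigmaEmbA a))
     | .dl _ => none,
   (r.pos.filterMap fun b => match b with
     | .dl B => some (.atom (sigmaBAtom B))
     | _ => none) ++ r.neg.map sigmaEmbB⟩

/-- The program `σ(P)`. -/
def sigmaProg (P : Set (Rule S)) : Set (Rule (sigmaSig S)) :=
  (⋃ r ∈ P, {sigmaRule r}) ∪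
  { r' | ∃ B ∈ DLatoms P, r' = ⟨sigmaBAtom B, [], [.dl (sigmaEmbDL B)]⟩ }

def sigmaO (O : Set (Fml S.fol)) : Set (Fml (sigmaSig S).fol) :=
  Fml.map (sigmaHom S) '' O

end
end DLP
namespace DLP
noncomputable section
attribute [local instance] Classical.propDecidable

/-! ### The congruence rewriting of equality -/

/-- Extend a signature by a fresh binary relation symbol `≈`. -/
def eqExt (σ : Sig) : Sig where
  Rel := σ.Rel ⊕ Unit
  arity := Sum.elim σ.arity fun _ => 2
  Const := σ.Const

def eqHom (σ : Sig) : SigHom σ (eqExt σ) := ⟨Sum.inl, fun _ => rfl, id⟩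

/-- The atom `t ≈ u`. -/
def approx {σ : Sig} (t u : Term (eqExt σ)) : Fml (eqExt σ) :=
  .rel (Sum.inr ()) ![t, u]

/-- Replace (true) equality by the fresh symbol `≈` throughout a formula. -/
def replaceEq {σ : Sig} : Fml σ → Fml (eqExt σ)
  | .rel R ts => .rel (Sum.inl R) fun i => (ts i).map (eqHom σ)
  | .eq t u => approx (t.map (eqHom σ)) (u.map (eqHom σ))
  | .falsum => .falsum
  | .imp f g => .imp (replaceEq f) (replaceEq g)
  | .all n f => .all n (replaceEq f)

def allsList {σ : Sig} (l : List ℕ) (f : Fml σ) : Fml σ := l.foldr Fml.all f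

/-- The reflexivity axiom `∀x (x ≈ x)`. -/
def approxRefl {σ : Sig} : Fml (eqExt σ) := .all 0 (approx (.var 0) (.var 0))

/-- The predicate-replacement (congruence) axiom for a relation symbol `R`:
`∀x⃗ y⃗ ((x⃗ ≈ y⃗) ⊃ (R(x⃗) ⊃ R(y⃗)))`. -/
def congrAx {σ : Sig} (R : σ.Rel) : Fml (eqExt σ) :=
  allsList (List.range (2 * σ.arity R)) <|
    (Fml.conjList ((List.finRange (σ.arity R)).map fun i =>
        approx (.var (i : ℕ)) (.var (σ.arity R + (i : ℕ))))).imp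
      ((Fml.rel (σ := eqExt σ) (Sum.inl R) fun i => .var (i : ℕ)).imp
        (Fml.rel (σ := eqExt σ) (Sum.inl R) fun i => .var (σ.arity R + (i : ℕ))))

variable {S : DLSig}

/-- `τ(O)`: the congruence rewriting of the ontology, together with the
reflexivity and predicate-replacement axioms for the relation symbols of the
ontology language occurring in `O`. -/
def tauO (O : Set (Fml S.fol)) : Set (Fml (eqExt S.fol)) :=
  (replaceEq '' O) ∪ {approxRefl} ∪
  { φ | ∃ R : S.Rel, (∃ ψ ∈ O, Sum.inl R ∈ ψ.RelIn) ∧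
      φ = congrAx (σ := S.fol) (Sum.inl R) }

/-- `τ(S op p)`: the conjunction over `p(c⃗) ∈ HB_P` of `p(c⃗) ⊃ S(c⃗)` (for
`⊕`), resp. `¬p(c⃗) ⊃ ¬S(c⃗)` (for `⊖`). -/
def tauEntry (P : Set (Rule S)) (en : DLEntry S) : Fml S.fol :=
  Fml.conjList
    (((Finset.univ : Finset (Fin en.n → S.Const)).toList.filter
        fun e => decide (en.patom e ∈ HB P)).map
      fun e =>
        if en.plus then ((en.patom e).fml).imp (en.lit e)
        else ((en.patom e).fml).not.imp (en.lit e).not)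

/-- `τ(A)` for a dl-atom `A = DL[λ; Q](t⃗)`. -/
def tauDL (P : Set (Rule S)) (A : DLAtom S) : Fml (eqExt S.fol) :=
  ((Fml.conjList (A.entries.map (tauEntry P))).map (eqHom S.fol)).imp (replaceEq A.Q)

/-- A program atom, as a sentence over the language with `≈`. -/
def PAtom.efml (a : PAtom S) : Fml (eqExt S.fol) := a.fml.map (eqHom S.fol)

/-- `τ(B)` for a body element. -/
def tauB (P : Set (Rule S)) : BElem S → Fml (eqExt S.fol)
  | .atom a => a.efml
  | .dl A => tauDL P A

/-! ### Default logic -/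

/-- A (closed) default `α : β₁,…,β_n / γ`. -/
structure Dft (σ : Sig) where
  pre : Fml σ
  jus : List (Fml σ)
  con : Fml σ

/-- A (closed) default theory `(D, W)`. -/
structure DThy (σ : Sig) where
  D : Set (Dft σ)
  W : Set (Fml σ)

/-- The stages `E_i` of the extension construction relative to a candidate
extension `E`. -/
def extStage {σ : Sig} (Δ : DThy σ) (E : Set (Fml σ)) : ℕ → Set (Fml σ)
  | 0 => Δ.W
  | i + 1 => Th (extStage Δ E i) ∪
      { γ | ∃ d ∈ Δ.D, d.pre ∈ extStage Δ E i ∧ (∀ β ∈ d.jus, Fml.not β ∉ E) ∧ γ = d.con }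

/-- `E` is an extension of the default theory `Δ`. -/
def IsExtension {σ : Sig} (Δ : DThy σ) (E : Set (Fml σ)) : Prop :=
  E = ⋃ i, extStage Δ E i

/-- The default theory `τ(K) = (τ(P), τ(O))`. -/
def tauThy (O : Set (Fml S.fol)) (P : Set (Rule S)) : DThy (eqExt S.fol) where
  D := { d | ∃ r ∈ P,
      d = ⟨Fml.conjList (r.pos.map (tauB P)),
           r.neg.map fun b => (tauB P b).not, r.head.efml⟩ }
  W := tauO O

/-- The default theory `τ*(K)`: `τ(K)` plus the defaults `: ¬p(c⃗) / ¬p(c⃗)`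
for every `p(c⃗) ∈ HB_P`. -/
def tauStarThy (O : Set (Fml S.fol)) (P : Set (Rule S)) : DThy (eqExt S.fol) where
  D := (tauThy O P).D ∪
    { d | ∃ a ∈ HB P, d = ⟨Fml.verum, [(PAtom.efml a).not], (PAtom.efml a).not⟩ }
  W := tauO O

/-! ### The translation τ' (no congruence rewriting; the ontology is moved
into the antecedents of the translated dl-atoms) -/

/-- `τ'(A)` for a dl-atom `A`; here the finite ontology `O` is identified with
the conjunction of its sentences and equality is kept as true equality. -/
def tauDL' (O : Finset (Fml S.fol)) (P : Set (Rule S)) (A : DLAtom S) : Fml S.fol :=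
  ((Fml.conjList O.toList).and (Fml.conjList (A.entries.map (tauEntry P)))).imp A.Q

def tauB' (O : Finset (Fml S.fol)) (P : Set (Rule S)) : BElem S → Fml S.fol
  | .atom a => a.fml
  | .dl A => tauDL' O P A

/-- The default theory `τ'(K) = (D, ∅)`. -/
def tauThy' (O : Finset (Fml S.fol)) (P : Set (Rule S)) : DThy S.fol where
  D := { d | ∃ r ∈ P,
      d = ⟨Fml.conjList (r.pos.map (tauB' O P)),
           r.neg.map fun b => (tauB' O P b).not, r.head.fml⟩ }
  W := ∅

/-! ### Well-supported semantics -/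

/-- `I` is a model of `K = (O,P)`. -/
def IsModel (O : Set (Fml S.fol)) (P : Set (Rule S)) (I : Set (PAtom S)) : Prop :=
  ∀ r ∈ P, (∀ b ∈ r.pos, SatB O I b) → (∀ b ∈ r.neg, ¬ SatB O I b) → r.head ∈ I

/-- `(E, I)` up-to satisfies a body element. -/
def UpSat (O : Set (Fml S.fol)) (E I : Set (PAtom S)) : BElem S → Prop
  | .atom a => a ∈ E
  | .dl A => ∀ F, E ⊆ F → F ⊆ I → SatDL O F A

/-- `(E, I)` up-to satisfies the default negation of a body element. -/
def UpSatN (O : Set (Fml S.fol)) (I' I : Set (PAtom S)) : BElem S → Prop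
  | .atom a => a ∉ I
  | .dl A => ¬ ∃ F, I' ⊆ F ∧ F ⊆ I ∧ SatDL O F A

/-- The operator `T_K`. -/
def TK (O : Set (Fml S.fol)) (P : Set (Rule S)) (E I : Set (PAtom S)) : Set (PAtom S) :=
  { a | ∃ r ∈ P, r.head = a ∧ (∀ b ∈ r.pos, UpSat O E I b) ∧ (∀ b ∈ r.neg, UpSatN O E I b) }

def TKiter (O : Set (Fml S.fol)) (P : Set (Rule S)) (I : Set (PAtom S)) : ℕ → Set (PAtom S)
  | 0 => ∅
  | k + 1 => TK O P (TKiter O P I k) I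

/-- `T_K^∞(∅, I)`. -/
def TKinf (O : Set (Fml S.fol)) (P : Set (Rule S)) (I : Set (PAtom S)) : Set (PAtom S) :=
  ⋃ k, TKiter O P I k

/-- The reduct `P^I` dropping negative bodies. -/
def negReduct (O : Set (Fml S.fol)) (P : Set (Rule S)) (I : Set (PAtom S)) : Set (Rule S) :=
  { r' | ∃ r ∈ P, (∀ b ∈ r.neg, ¬ SatB O I b) ∧ r' = ⟨r.head, r.pos, []⟩ }

/-- `I` is a weakly well-supported answer set of `K`. -/
def WWS (O : Set (Fml S.fol)) (P : Set (Rule S)) (I : Set (PAtom S)) : Prop :=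
  IsModel O P I ∧ I = TKinf O (negReduct O P I) I

/-- `I` is a strongly well-supported answer set of `K`. -/
def SWS (O : Set (Fml S.fol)) (P : Set (Rule S)) (I : Set (PAtom S)) : Prop :=
  IsModel O P I ∧ I = TKinf O P I

end
end DLP

/-!
`π*` replaces a positive dl-atom `B` by `not π_B`, where `π_B ← not π(B)` makes `π_B` true
exactly when `B` fails, and an input `S ⊖ p` by `¬S ⊕ π_p`, where `π_p(c⃗) ← not p(c⃗)` makes
`π_p` the complement of `p`. Call `I*` a lift of `I` if its embedded atoms are those of `I`, its
`π_p(c⃗)` (for `p` behind some `⊖`) are those with `p(c⃗) ∉ I`, and its `π_B` (for positive `B`)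
are those with `I ⊭_O B`. Structures of the original signature are exactly the restrictions of
structures of the π-signature, so over a lift `π(B)` holds iff `B` does. Hence a main rule of
`π*(P)` survives the weak transform at `I*` iff its source survives at `I`, the survivors among
them are the embedded rules of `wP_O^I`, and the other survivors are facts whose heads are the
π-atoms of `I*`. So `I*` is a weak answer set of `π*(K)` iff `I` is one of `K`. Both `π*(I)`
and a weak answer set `I*` of `π*(K)` are lifts (of `I` and of `I* ∩ HB_P`), the latter because
its π-atoms are the heads of surviving facts.
-/

namespace DLP

section Conservativity

variable {σ τ : Sig}

def Struc.restrict (h : SigHom σ τ) (M : Struc τ) : Struc σ where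
  Dom := M.Dom
  dne := M.dne
  cI c := M.cI (h.onConst c)
  rI R f := M.rI (h.onRel R) fun i => f (Fin.cast (h.har R) i)

theorem Term.val_map (h : SigHom σ τ) (M : Struc τ) (env : ℕ → M.Dom) (t : Term σ) :
    (t.map h).val M env = t.val (M.restrict h) env := by
  cases t <;> rfl

theorem Fml.sat_map (h : SigHom σ τ) (M : Struc τ) (φ : Fml σ) (env : ℕ → M.Dom) :
    (φ.map h).Sat M env ↔ φ.Sat (M.restrict h) env := by
  induction φ generalizing env with
  | rel R ts => simp only [Fml.map, Fml.Sat, Term.val_map]; rfl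
  | eq t u => simp only [Fml.map, Fml.Sat, Term.val_map]; rfl
  | falsum => rfl
  | imp f g ihf ihg => exact imp_congr (ihf env) (ihg env)
  | all n f ih => exact forall_congr' fun d => ih _

theorem Struc.models_map (h : SigHom σ τ) (M : Struc τ) (φ : Fml σ) :
    M.models (φ.map h) ↔ (M.restrict h).models φ :=
  forall_congr' fun env => Fml.sat_map h M φ env

theorem Struc.modelsSet_iff_subset (M : Struc σ) (Γ : Set (Fml σ)) :
    M.modelsSet Γ ↔ Γ ⊆ {φ | M.models φ} :=
  Iff.rfl

theorem entails_map_iff {h : SigHom σ τ} (hsurj : ∀ N : Struc σ, ∃ M : Struc τ, M.restrict h = N)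
    {Γ : Set (Fml τ)} {Δ : Set (Fml σ)}
    (hΓΔ : ∀ M : Struc τ, M.modelsSet Γ ↔ (M.restrict h).modelsSet Δ)
    (φ : Fml σ) : Entails Γ (φ.map h) ↔ Entails Δ φ := by
  constructor
  · intro hΓ N hN
    obtain ⟨M, rfl⟩ := hsurj N
    exact (M.models_map h φ).1 (hΓ M ((hΓΔ M).2 hN))
  · intro hΔ M hM
    exact (M.models_map h φ).2 (hΔ _ ((hΓΔ M).1 hM))

end Conservativity

section PiSignature

variable {S : DLSig}

def extStruc (N : Struc S.fol) : Struc (piSig S).fol where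
  Dom := N.Dom
  dne := N.dne
  cI := N.cI
  rI
    | .inl R => N.rI (.inl R)
    | .inr (.inl p) => N.rI (.inr p)
    | .inr (.inr _) => fun _ => False

theorem restrict_extStruc (N : Struc S.fol) : (extStruc N).restrict (piHom S) = N := by
  obtain ⟨Dom, dne, cI, rI⟩ := N
  simp only [Struc.restrict, extStruc]
  congr
  funext R f
  rcases R with R | p <;> rfl

theorem embA_injective : Function.Injective (embA (S := S)) := by
  rintro ⟨p, e⟩ ⟨q, f⟩ h
  cases h
  rfl

theorem piBAtom_injective : Function.Injective (piBAtom (S := S)) := by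
  intro B C h
  cases h
  rfl

theorem piPAtom_inj {p q : S.PP} {e f} (h : piPAtom p e = piPAtom q f) :
    (⟨p, e⟩ : PAtom S) = ⟨q, f⟩ := by
  cases h
  rfl

@[simp] theorem embA_ne_piPAtom {x : PAtom S} {p e} : embA x ≠ piPAtom p e := nofun

@[simp] theorem embA_ne_piBAtom {x : PAtom S} {B} : embA x ≠ piBAtom B := nofun

@[simp] theorem piPAtom_ne_piBAtom {p : S.PP} {e B} : piPAtom p e ≠ piBAtom B := nofun

theorem PAtom.forall_piSig {q : PAtom (piSig S) → Prop} :
    (∀ a, q a) ↔ (∀ x, q (embA x)) ∧ (∀ p e, q (piPAtom p e)) ∧ ∀ B, q (piBAtom B) := by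
  refine ⟨fun h => ⟨fun _ => h _, fun _ _ => h _, fun _ => h _⟩, ?_⟩
  rintro ⟨hemb, hpi, hB⟩ ⟨p | p | B, e⟩
  · exact hemb ⟨p, e⟩
  · exact hpi p e
  · have : e = fun i => i.elim0 := funext fun i => i.elim0
    exact this ▸ hB B

def IsOminusPred (P : Set (Rule S)) (p : S.PP) : Prop := ∃ B ∈ DLatoms P, ominusIn B p

def IsPosDLAtom (P : Set (Rule S)) (B : DLAtom S) : Prop := ∃ r ∈ P, BElem.dl B ∈ r.pos

/-- `¬S ⊕ π_p`, the entry that `π` puts in place of `S ⊖ p`. -/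
def ominusEntry (en : DLEntry S) : DLEntry (piSig S) :=
  ⟨en.n, en.R, en.hR, !en.neg, true, Sum.inr (Sum.inl en.p), en.hp⟩

theorem piEntry_of_oplus {en : DLEntry S} (h : en.plus = true) : piEntry en = embEntry en := by
  simp [piEntry, h]

theorem piEntry_of_ominus {en : DLEntry S} (h : en.plus = false) :
    piEntry en = ominusEntry en := by
  simp [piEntry, h, ominusEntry]

theorem sat_lit_embEntry (en : DLEntry S) (e : Fin en.n → S.Const) (M : Struc (piSig S).fol)
    (env : ℕ → M.Dom) :
    ((embEntry en).lit e).Sat M env ↔ (en.lit e).Sat (M.restrict (piHom S)) env := by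
  cases h : en.neg <;>
    simp [embEntry, DLEntry.lit, h, Fml.not, Fml.Sat, Struc.restrict, Term.val] <;> rfl

theorem sat_lit_ominusEntry (en : DLEntry S) (e : Fin en.n → S.Const) (M : Struc (piSig S).fol)
    (env : ℕ → M.Dom) :
    ((ominusEntry en).lit e).Sat M env ↔ (en.lit e).not.Sat (M.restrict (piHom S)) env := by
  cases h : en.neg <;>
    simp [ominusEntry, DLEntry.lit, h, Fml.not, Fml.Sat, Struc.restrict, Term.val] <;> rfl

theorem DLEntry.modelsSet_input_of_oplus {en : DLEntry S} (h : en.plus = true)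
    (I : Set (PAtom S)) (M : Struc S.fol) :
    M.modelsSet (en.input I) ↔ ∀ e, en.patom e ∈ I → M.models (en.lit e) := by
  simp only [Struc.modelsSet, DLEntry.input, h, if_true, Set.mem_ofPred_eq]
  exact ⟨fun hM e he => hM _ ⟨e, he, rfl⟩, fun hM _ ⟨e, he, hφ⟩ => hφ ▸ hM e he⟩

theorem DLEntry.modelsSet_input_of_ominus {en : DLEntry S} (h : en.plus = false)
    (I : Set (PAtom S)) (M : Struc S.fol) :
    M.modelsSet (en.input I) ↔ ∀ e, en.patom e ∉ I → M.models (en.lit e).not := by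
  simp only [Struc.modelsSet, DLEntry.input, h, Bool.false_eq_true, if_false, Set.mem_ofPred_eq]
  exact ⟨fun hM e he => hM _ ⟨e, he, rfl⟩, fun hM _ ⟨e, he, hφ⟩ => hφ ▸ hM e he⟩

theorem modelsSet_input_piEntry {P : Set (Rule S)} {I : Set (PAtom S)}
    {Istar : Set (PAtom (piSig S))} (hemb : ∀ x, embA x ∈ Istar ↔ x ∈ I)
    (hpi : ∀ p e, piPAtom p e ∈ Istar ↔ IsOminusPred P p ∧ (⟨p, e⟩ : PAtom S) ∉ I)
    {en : DLEntry S} (hen : en.plus = false → IsOminusPred P en.p) (M : Struc (piSig S).fol) :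
    M.modelsSet ((piEntry en).input Istar) ↔ (M.restrict (piHom S)).modelsSet (en.input I) := by
  cases hpl : en.plus
  · rw [piEntry_of_ominus hpl, DLEntry.modelsSet_input_of_oplus rfl,
      DLEntry.modelsSet_input_of_ominus hpl]
    refine forall_congr' fun e => imp_congr ((hpi _ _).trans (and_iff_right (hen hpl))) ?_
    exact forall_congr' fun env => sat_lit_ominusEntry en e M env
  · rw [piEntry_of_oplus hpl, DLEntry.modelsSet_input_of_oplus (en := embEntry en) hpl,
      DLEntry.modelsSet_input_of_oplus hpl]
    exact forall_congr' fun e =>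
      imp_congr (hemb (en.patom e)) (forall_congr' fun env => sat_lit_embEntry en e M env)

theorem satDL_piDL_iff {O : Set (Fml S.fol)} {P : Set (Rule S)} {I : Set (PAtom S)}
    {Istar : Set (PAtom (piSig S))} (hemb : ∀ x, embA x ∈ Istar ↔ x ∈ I)
    (hpi : ∀ p e, piPAtom p e ∈ Istar ↔ IsOminusPred P p ∧ (⟨p, e⟩ : PAtom S) ∉ I)
    {B : DLAtom S} (hB : B ∈ DLatoms P) :
    SatDL (piO O) Istar (piDL B) ↔ SatDL O I B := by
  refine entails_map_iff (fun N => ⟨extStruc N, restrict_extStruc N⟩) (fun M => ?_) B.Q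
  have hO : M.modelsSet (piO O) ↔ (M.restrict (piHom S)).modelsSet O := by
    simp only [piO, Struc.modelsSet_iff_subset, Set.image_subset_iff]
    exact forall₂_congr fun φ _ => M.models_map (piHom S) φ
  have hen : ∀ en ∈ B.entries, M.modelsSet ((piEntry en).input Istar) ↔
      (M.restrict (piHom S)).modelsSet (en.input I) := fun en hen =>
    modelsSet_input_piEntry hemb hpi (fun h => ⟨B, hB, en, hen, h, rfl⟩) M
  simp only [piDL, Struc.modelsSet_iff_subset, Set.union_subset_iff, Set.iUnion₂_subset_iff,
    List.forall_mem_map] at hO hen ⊢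
  exact and_congr hO (forall₂_congr hen)

end PiSignature

section LeastModel

variable {S : DLSig} {O : Set (Fml S.fol)} {R : Set (Rule S)}

def IsAtomicProg (R : Set (Rule S)) : Prop := ∀ r ∈ R, ∀ b ∈ r.pos, ∃ a, b = BElem.atom a

theorem gamma_mono (hR : IsAtomicProg R) : Monotone (gamma O R) := by
  rintro J J' hJ a ⟨r, hr, rfl, hpos⟩
  refine ⟨r, hr, rfl, fun b hb => ?_⟩
  obtain ⟨x, rfl⟩ := hR r hr b hb
  exact hJ (hpos _ hb)

theorem gammaIter_mono (hR : IsAtomicProg R) : Monotone (gammaIter O R) :=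
  monotone_nat_of_le_succ fun k => by
    induction k with
    | zero => exact Set.empty_subset _
    | succ k ih => exact gamma_mono hR ih

theorem exists_rule_of_mem_lfpGamma {a : PAtom S} (ha : a ∈ lfpGamma O R) :
    ∃ r ∈ R, r.head = a := by
  obtain ⟨k, hk⟩ := Set.mem_iUnion.mp ha
  cases k with
  | zero => exact absurd hk (Set.notMem_empty a)
  | succ k => obtain ⟨r, hr, hhead, -⟩ := hk; exact ⟨r, hr, hhead⟩

theorem lfpGamma_subset_of_closed (hR : IsAtomicProg R) {J : Set (PAtom S)}
    (hJ : ∀ r ∈ R, (∀ b ∈ r.pos, SatB O J b) → r.head ∈ J) : lfpGamma O R ⊆ J := by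
  refine Set.iUnion_subset fun k => ?_
  induction k with
  | zero => exact Set.empty_subset _
  | succ k ih =>
    rintro a ⟨r, hr, rfl, hpos⟩
    refine hJ r hr fun b hb => ?_
    obtain ⟨x, rfl⟩ := hR r hr b hb
    exact ih (hpos _ hb)

/-- The rule bodies are finite, so a body true in the union of the iterates is already true in
one of them. -/
theorem head_mem_lfpGamma (hR : IsAtomicProg R) {r : Rule S} (hr : r ∈ R)
    (hpos : ∀ b ∈ r.pos, SatB O (lfpGamma O R) b) : r.head ∈ lfpGamma O R := by
  classical
  have hstage : ∀ b ∈ r.pos, ∃ k, SatB O (gammaIter O R k) b := fun b hb => by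
    obtain ⟨x, rfl⟩ := hR r hr b hb
    exact Set.mem_iUnion.mp (hpos _ hb)
  choose! k hk using hstage
  obtain ⟨K, hK⟩ := Finset.exists_le (r.pos.toFinset.image k)
  refine Set.mem_iUnion.mpr ⟨K + 1, r, hr, rfl, fun b hb => ?_⟩
  obtain ⟨x, rfl⟩ := hR r hr b hb
  exact gammaIter_mono hR (hK _ (Finset.mem_image_of_mem k (List.mem_toFinset.mpr hb)))
    (hk _ hb)

end LeastModel

section WeakTransform

attribute [local instance] Classical.propDecidable

variable {S : DLSig}

def Rule.KeptInWReduct (O : Set (Fml S.fol)) (I : Set (PAtom S)) (r : Rule S) : Prop :=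
  (∀ A : DLAtom S, BElem.dl A ∈ r.pos → SatDL O I A) ∧ ∀ b ∈ r.neg, ¬ SatB O I b

noncomputable def Rule.atomicPart (r : Rule S) : Rule S :=
  ⟨r.head, r.pos.filter fun b => decide (∃ a, b = BElem.atom a), []⟩

theorem mem_wReduct {O : Set (Fml S.fol)} {P : Set (Rule S)} {I : Set (PAtom S)} {r' : Rule S} :
    r' ∈ wReduct O P I ↔ ∃ r ∈ P, r.KeptInWReduct O I ∧ r' = r.atomicPart := by
  simp only [wReduct, Rule.KeptInWReduct, Rule.atomicPart, and_assoc]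
  rfl

theorem atomicPart_mem_wReduct {O : Set (Fml S.fol)} {P : Set (Rule S)} {I : Set (PAtom S)}
    {r : Rule S} (hr : r ∈ P) (hkept : r.KeptInWReduct O I) : r.atomicPart ∈ wReduct O P I :=
  mem_wReduct.mpr ⟨r, hr, hkept, rfl⟩

theorem Rule.mem_atomicPart_pos {r : Rule S} {b : BElem S} :
    b ∈ r.atomicPart.pos ↔ b ∈ r.pos ∧ ∃ a, b = BElem.atom a := by
  simp [Rule.atomicPart]

theorem isAtomicProg_wReduct (O : Set (Fml S.fol)) (P : Set (Rule S)) (I : Set (PAtom S)) :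
    IsAtomicProg (wReduct O P I) := by
  rintro _ h b hb
  obtain ⟨r, -, -, rfl⟩ := mem_wReduct.mp h
  exact (Rule.mem_atomicPart_pos.mp hb).2

end WeakTransform

section PiStarProgram

variable {S : DLSig}

def piBRule (B : DLAtom S) : Rule (piSig S) := ⟨piBAtom B, [], [.dl (piDL B)]⟩

def piPRule (p : S.PP) (e : Fin (S.pArity p) → S.Const) : Rule (piSig S) :=
  ⟨piPAtom p e, [], [.atom (embA ⟨p, e⟩)]⟩

theorem mem_piStarProg {P : Set (Rule S)} {r' : Rule (piSig S)} :
    r' ∈ piStarProg P ↔ (∃ r ∈ P, r' = piStarRuleMain r) ∨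
      (∃ B, IsPosDLAtom P B ∧ r' = piBRule B) ∨
      ∃ p, IsOminusPred P p ∧ ∃ e, r' = piPRule p e := by
  simp only [piStarProg, IsPosDLAtom, IsOminusPred, DLatoms, piBRule, piPRule, Set.mem_union,
    Set.mem_iUnion, Set.mem_singleton_iff, Set.mem_ofPred_eq, exists_prop, or_assoc]
  refine or_congr Iff.rfl (or_congr ?_ ?_)
  · exact ⟨fun ⟨r, hr, B, hB, h⟩ => ⟨B, ⟨r, hr, hB⟩, h⟩,
      fun ⟨B, ⟨r, hr, hB⟩, h⟩ => ⟨r, hr, B, hB, h⟩⟩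
  · exact ⟨fun ⟨r, hr, B, hB, p, hp, h⟩ => ⟨p, ⟨B, ⟨r, hr, hB⟩, hp⟩, h⟩,
      fun ⟨p, ⟨B, ⟨r, hr, hB⟩, hp⟩, h⟩ => ⟨r, hr, B, hB, p, hp, h⟩⟩

theorem keptInWReduct_piBRule {O' : Set (Fml (piSig S).fol)} {Istar : Set (PAtom (piSig S))}
    {B : DLAtom S} : (piBRule B).KeptInWReduct O' Istar ↔ ¬ SatDL O' Istar (piDL B) := by
  simp [Rule.KeptInWReduct, piBRule, SatB]

theorem keptInWReduct_piPRule {O' : Set (Fml (piSig S).fol)} {Istar : Set (PAtom (piSig S))}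
    {p : S.PP} {e} : (piPRule p e).KeptInWReduct O' Istar ↔ embA ⟨p, e⟩ ∉ Istar := by
  simp [Rule.KeptInWReduct, piPRule, SatB]

theorem mem_atomicPart_piStarRuleMain_pos {r : Rule S} {b : BElem (piSig S)} :
    b ∈ (piStarRuleMain r).atomicPart.pos ↔ ∃ x, BElem.atom x ∈ r.pos ∧ b = .atom (embA x) := by
  simp only [Rule.mem_atomicPart_pos, piStarRuleMain, List.mem_filterMap]
  constructor
  · rintro ⟨⟨a | A, ha, hb⟩, -⟩
    · exact ⟨a, ha, (Option.some.inj hb).symm⟩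
    · cases hb
  · rintro ⟨x, hx, rfl⟩
    exact ⟨⟨_, hx, rfl⟩, _, rfl⟩

end PiStarProgram

section PiStarFacts

variable {S : DLSig} {O' : Set (Fml (piSig S).fol)} {P : Set (Rule S)}
  {Istar : Set (PAtom (piSig S))}

theorem head_mem_lfpGamma_of_fact {r : Rule (piSig S)} (hr : r ∈ piStarProg P)
    (hkept : r.KeptInWReduct O' Istar) (hpos : r.pos = []) :
    r.head ∈ lfpGamma O' (wReduct O' (piStarProg P) Istar) :=
  head_mem_lfpGamma (r := r.atomicPart) (isAtomicProg_wReduct _ _ _)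
    (atomicPart_mem_wReduct hr hkept) fun b hb => by simp [Rule.mem_atomicPart_pos, hpos] at hb

theorem piPAtom_mem_lfpGamma_iff {p : S.PP} {e} :
    piPAtom p e ∈ lfpGamma O' (wReduct O' (piStarProg P) Istar) ↔
      IsOminusPred P p ∧ embA ⟨p, e⟩ ∉ Istar := by
  constructor
  · intro h
    obtain ⟨_, hr', hhead⟩ := exists_rule_of_mem_lfpGamma h
    obtain ⟨r₀, hr₀, hkept, rfl⟩ := mem_wReduct.mp hr'
    rcases mem_piStarProg.mp hr₀ with ⟨r, -, rfl⟩ | ⟨B, -, rfl⟩ | ⟨q, hq, f, rfl⟩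
    · exact absurd hhead embA_ne_piPAtom
    · exact absurd hhead.symm piPAtom_ne_piBAtom
    · cases piPAtom_inj hhead
      exact ⟨hq, keptInWReduct_piPRule.mp hkept⟩
  · rintro ⟨hp, hnot⟩
    exact head_mem_lfpGamma_of_fact (mem_piStarProg.mpr (.inr (.inr ⟨p, hp, e, rfl⟩)))
      (keptInWReduct_piPRule.mpr hnot) rfl

theorem piBAtom_mem_lfpGamma_iff {B : DLAtom S} :
    piBAtom B ∈ lfpGamma O' (wReduct O' (piStarProg P) Istar) ↔
      IsPosDLAtom P B ∧ ¬ SatDL O' Istar (piDL B) := by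
  constructor
  · intro h
    obtain ⟨_, hr', hhead⟩ := exists_rule_of_mem_lfpGamma h
    obtain ⟨r₀, hr₀, hkept, rfl⟩ := mem_wReduct.mp hr'
    rcases mem_piStarProg.mp hr₀ with ⟨r, -, rfl⟩ | ⟨C, hC, rfl⟩ | ⟨q, -, f, rfl⟩
    · exact absurd hhead embA_ne_piBAtom
    · cases piBAtom_injective hhead
      exact ⟨hC, keptInWReduct_piBRule.mp hkept⟩
    · exact absurd hhead piPAtom_ne_piBAtom
  · rintro ⟨hB, hnot⟩
    exact head_mem_lfpGamma_of_fact (mem_piStarProg.mpr (.inr (.inl ⟨B, hB, rfl⟩)))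
      (keptInWReduct_piBRule.mpr hnot) rfl

end PiStarFacts

section PiStarHerbrandBase

variable {S : DLSig} {P : Set (Rule S)}

theorem Rule.mem_preds {r : Rule S} {q : S.PP} :
    q ∈ r.preds ↔ q = r.head.p ∨ (∃ b ∈ r.pos, q ∈ b.preds) ∨ ∃ b ∈ r.neg, q ∈ b.preds := by
  simp only [Rule.preds, Set.mem_union, Set.mem_singleton_iff, Set.mem_iUnion, exists_prop,
    or_assoc]

theorem exists_mem_preds_of_mem_DLatoms {B : DLAtom S} (hB : B ∈ DLatoms P) {en : DLEntry S}
    (hen : en ∈ B.entries) : ∃ r ∈ P, en.p ∈ r.preds := by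
  obtain ⟨r, hr, hB | hB⟩ := hB
  · exact ⟨r, hr, Rule.mem_preds.2 (.inr (.inl ⟨_, hB, en, hen, rfl⟩))⟩
  · exact ⟨r, hr, Rule.mem_preds.2 (.inr (.inr ⟨_, hB, en, hen, rfl⟩))⟩

/-- What an occurrence of a predicate of the π-signature in `π*(P)` says about `P`. -/
def PiStarPredOrigin (P : Set (Rule S)) : (piSig S).PP → Prop
  | .inl p => ∃ r ∈ P, p ∈ r.preds
  | .inr (.inl p) => IsOminusPred P p
  | .inr (.inr B) => IsPosDLAtom P B

theorem piStarPredOrigin_of_mem_preds_piDL {B : DLAtom S} (hB : B ∈ DLatoms P)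
    {q : (piSig S).PP} (hq : q ∈ (BElem.dl (piDL B)).preds) : PiStarPredOrigin P q := by
  obtain ⟨_, hen', rfl⟩ := hq
  obtain ⟨en, hen, rfl⟩ := List.mem_map.mp hen'
  cases hpl : en.plus
  · rw [piEntry_of_ominus hpl]
    exact ⟨B, hB, en, hen, hpl, rfl⟩
  · rw [piEntry_of_oplus hpl]
    exact exists_mem_preds_of_mem_DLatoms hB hen

theorem piStarPredOrigin_of_mem_preds {r' : Rule (piSig S)} (hr' : r' ∈ piStarProg P)
    {q : (piSig S).PP} (hq : q ∈ r'.preds) : PiStarPredOrigin P q := by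
  rcases mem_piStarProg.mp hr' with ⟨r, hr, rfl⟩ | ⟨B, hB, rfl⟩ | ⟨p, hp, e, rfl⟩
  · rcases Rule.mem_preds.mp hq with rfl | ⟨b, hb, hq⟩ | ⟨b, hb, hq⟩
    · exact ⟨r, hr, Rule.mem_preds.2 (.inl rfl)⟩
    · obtain ⟨a | A, ha, hb⟩ := List.mem_filterMap.mp hb <;> cases hb
      obtain rfl := hq
      exact ⟨r, hr, Rule.mem_preds.2 (.inr (.inl ⟨_, ha, rfl⟩))⟩
    · rcases List.mem_append.mp hb with hb | hb
      · obtain ⟨a | A, ha, hb⟩ := List.mem_filterMap.mp hb <;> cases hb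
        obtain rfl := hq
        exact ⟨r, hr, ha⟩
      · obtain ⟨a | A, ha, rfl⟩ := List.mem_map.mp hb
        · obtain rfl := hq
          exact ⟨r, hr, Rule.mem_preds.2 (.inr (.inr ⟨_, ha, rfl⟩))⟩
        · exact piStarPredOrigin_of_mem_preds_piDL ⟨r, hr, .inr ha⟩ hq
  · obtain ⟨r, hr, hB'⟩ := hB
    rcases Rule.mem_preds.mp hq with rfl | ⟨b, hb, -⟩ | ⟨b, hb, hq⟩
    · exact ⟨r, hr, hB'⟩
    · cases hb
    · obtain rfl := List.mem_singleton.mp hb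
      exact piStarPredOrigin_of_mem_preds_piDL ⟨r, hr, .inl hB'⟩ hq
  · rcases Rule.mem_preds.mp hq with rfl | ⟨b, hb, -⟩ | ⟨b, hb, hq⟩
    · exact hp
    · cases hb
    · obtain rfl := List.mem_singleton.mp hb
      obtain rfl := hq
      obtain ⟨B, hB, en, hen, -, rfl⟩ := hp
      exact exists_mem_preds_of_mem_DLatoms hB hen

theorem piPAtom_mem_HB_iff {p : S.PP} {e} :
    piPAtom p e ∈ HB (piStarProg P) ↔ IsOminusPred P p :=
  ⟨fun ⟨_, hr', hq⟩ => piStarPredOrigin_of_mem_preds hr' hq, fun hp =>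
    ⟨piPRule p e, mem_piStarProg.2 (.inr (.inr ⟨p, hp, e, rfl⟩)), Rule.mem_preds.2 (.inl rfl)⟩⟩

theorem piBAtom_mem_HB_iff {B : DLAtom S} :
    piBAtom B ∈ HB (piStarProg P) ↔ IsPosDLAtom P B :=
  ⟨fun ⟨_, hr', hq⟩ => piStarPredOrigin_of_mem_preds hr' hq, fun hB =>
    ⟨piBRule B, mem_piStarProg.2 (.inr (.inl ⟨B, hB, rfl⟩)), Rule.mem_preds.2 (.inl rfl)⟩⟩

theorem mem_HB_of_embA_mem_HB {x : PAtom S} (hx : embA x ∈ HB (piStarProg P)) : x ∈ HB P :=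
  let ⟨_, hr', hq⟩ := hx
  piStarPredOrigin_of_mem_preds hr' hq

end PiStarHerbrandBase

section Lift

variable {S : DLSig}

/-- `I*` relates to `I` as `π*(I)` does, atom by atom. -/
structure IsPiStarLift (O : Set (Fml S.fol)) (P : Set (Rule S)) (I : Set (PAtom S))
    (Istar : Set (PAtom (piSig S))) : Prop where
  embA_mem_iff : ∀ x, embA x ∈ Istar ↔ x ∈ I
  piPAtom_mem_iff : ∀ p e, piPAtom p e ∈ Istar ↔ IsOminusPred P p ∧ (⟨p, e⟩ : PAtom S) ∉ I
  piBAtom_mem_iff : ∀ B, piBAtom B ∈ Istar ↔ IsPosDLAtom P B ∧ ¬ SatDL O I B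

namespace IsPiStarLift

variable {O : Set (Fml S.fol)} {P : Set (Rule S)} {I : Set (PAtom S)}
  {Istar : Set (PAtom (piSig S))}

theorem keptInWReduct_piStarRuleMain_iff (h : IsPiStarLift O P I Istar) {r : Rule S}
    (hr : r ∈ P) :
    (piStarRuleMain r).KeptInWReduct (piO O) Istar ↔ r.KeptInWReduct O I := by
  have hpos : ∀ A, BElem.dl A ∈ r.pos → (piBAtom A ∉ Istar ↔ SatDL O I A) := fun A hA => by
    simp [h.piBAtom_mem_iff, show IsPosDLAtom P A from ⟨r, hr, hA⟩]
  have hneg : ∀ b ∈ r.neg, SatB (piO O) Istar (piNeg b) ↔ SatB O I b := by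
    rintro (a | B) hb
    · exact h.embA_mem_iff a
    · exact satDL_piDL_iff h.embA_mem_iff h.piPAtom_mem_iff ⟨r, hr, .inr hb⟩
  simp only [Rule.KeptInWReduct, piStarRuleMain, List.mem_append, List.mem_filterMap,
    List.mem_map]
  constructor
  · rintro ⟨-, hn⟩
    exact ⟨fun A hA => (hpos A hA).1 (hn _ (.inl ⟨_, hA, rfl⟩)),
      fun b hb => (hneg b hb).not.1 (hn _ (.inr ⟨b, hb, rfl⟩))⟩
  · rintro ⟨hp, hn⟩
    refine ⟨fun A ⟨a, _, ha⟩ => by cases a <;> simp [piStarPos] at ha, ?_⟩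
    rintro _ (⟨a | A, ha, hb⟩ | ⟨b, hb, rfl⟩)
    · simp [piStarPosNeg] at hb
    · cases hb
      exact (hpos A ha).2 (hp A ha)
    · exact (hneg b hb).not.2 (hn b hb)

theorem embA_mem_lfpGamma_iff (h : IsPiStarLift O P I Istar) {x : PAtom S} :
    embA x ∈ lfpGamma (piO O) (wReduct (piO O) (piStarProg P) Istar) ↔
      x ∈ lfpGamma O (wReduct O P I) := by
  constructor
  · suffices lfpGamma (piO O) (wReduct (piO O) (piStarProg P) Istar) ⊆
        {a | ∀ x, a = embA x → x ∈ lfpGamma O (wReduct O P I)} from fun hx => this hx x rfl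
    refine lfpGamma_subset_of_closed (isAtomicProg_wReduct _ _ _) fun r' hr' hbody => ?_
    obtain ⟨r₀, hr₀, hkept, rfl⟩ := mem_wReduct.mp hr'
    rcases mem_piStarProg.mp hr₀ with ⟨r, hr, rfl⟩ | ⟨B, -, rfl⟩ | ⟨p, -, e, rfl⟩
    · rintro x hx
      cases embA_injective hx
      refine head_mem_lfpGamma (r := r.atomicPart) (isAtomicProg_wReduct _ _ _)
        (atomicPart_mem_wReduct hr ((h.keptInWReduct_piStarRuleMain_iff hr).1 hkept)) ?_
      intro b hb
      obtain ⟨hb, y, rfl⟩ := Rule.mem_atomicPart_pos.mp hb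
      exact hbody _ (mem_atomicPart_piStarRuleMain_pos.2 ⟨y, hb, rfl⟩) y rfl
    · exact fun x hx => absurd hx.symm embA_ne_piBAtom
    · exact fun x hx => absurd hx.symm embA_ne_piPAtom
  · suffices lfpGamma O (wReduct O P I) ⊆
        embA ⁻¹' lfpGamma (piO O) (wReduct (piO O) (piStarProg P) Istar) from fun hx => this hx
    refine lfpGamma_subset_of_closed (isAtomicProg_wReduct _ _ _) fun r' hr' hbody => ?_
    obtain ⟨r, hr, hkept, rfl⟩ := mem_wReduct.mp hr'
    refine head_mem_lfpGamma (r := (piStarRuleMain r).atomicPart) (isAtomicProg_wReduct _ _ _)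
      (atomicPart_mem_wReduct (mem_piStarProg.2 (.inl ⟨r, hr, rfl⟩))
        ((h.keptInWReduct_piStarRuleMain_iff hr).2 hkept)) ?_
    intro b hb
    obtain ⟨y, hy, rfl⟩ := mem_atomicPart_piStarRuleMain_pos.1 hb
    exact hbody _ (Rule.mem_atomicPart_pos.2 ⟨hy, y, rfl⟩)

theorem weakAS_iff (h : IsPiStarLift O P I Istar) :
    WeakAS (piO O) (piStarProg P) Istar ↔ WeakAS O P I := by
  have hpi : ∀ p e, piPAtom p e ∈ Istar ↔
      piPAtom p e ∈ lfpGamma (piO O) (wReduct (piO O) (piStarProg P) Istar) := fun p e => by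
    rw [h.piPAtom_mem_iff, piPAtom_mem_lfpGamma_iff, h.embA_mem_iff]
  have hB : ∀ B, piBAtom B ∈ Istar ↔
      piBAtom B ∈ lfpGamma (piO O) (wReduct (piO O) (piStarProg P) Istar) := fun B => by
    rw [h.piBAtom_mem_iff, piBAtom_mem_lfpGamma_iff]
    exact and_congr_right fun ⟨r, hr, hB⟩ =>
      (satDL_piDL_iff h.embA_mem_iff h.piPAtom_mem_iff ⟨r, hr, .inl hB⟩).not.symm
  simp only [WeakAS, Set.ext_iff]
  rw [PAtom.forall_piSig, and_iff_left ⟨hpi, hB⟩]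
  exact forall_congr' fun x => by rw [h.embA_mem_iff, h.embA_mem_lfpGamma_iff]

end IsPiStarLift

end Lift

section LiftInstances

variable {S : DLSig} {O : Set (Fml S.fol)} {P : Set (Rule S)}

theorem isPiStarLift_piStarSet (I : Set (PAtom S)) : IsPiStarLift O P I (piStarSet O P I) where
  embA_mem_iff x := by
    simp [piStarSet, embA_injective.mem_set_image]
  piPAtom_mem_iff p e := by
    simp only [piStarSet, Set.mem_union, Set.mem_image, embA_ne_piPAtom, Set.mem_ofPred_eq,
      piPAtom_mem_HB_iff]
    constructor
    · rintro ((⟨_, -, ⟨⟩⟩ | ⟨q, f, h, hp, hnot⟩) | ⟨_, -, -, ⟨⟩, -⟩)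
      cases piPAtom_inj h
      exact ⟨hp, hnot⟩
    · rintro ⟨hp, hnot⟩
      exact .inl (.inr ⟨p, e, rfl, hp, hnot⟩)
  piBAtom_mem_iff B := by
    simp only [piStarSet, Set.mem_union, Set.mem_image, embA_ne_piBAtom, Set.mem_ofPred_eq,
      piBAtom_injective.eq_iff, piBAtom_mem_HB_iff]
    constructor
    · rintro ((⟨_, -, ⟨⟩⟩ | ⟨_, _, h, -⟩) | ⟨_, -, hns, rfl, hB⟩)
      · exact absurd h.symm piPAtom_ne_piBAtom
      · exact ⟨hB, hns⟩
    · rintro ⟨⟨r, hr, hB⟩, hns⟩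
      exact .inr ⟨B, ⟨r, hr, .inl hB⟩, hns, rfl, r, hr, hB⟩

theorem isPiStarLift_of_weakAS {Istar : Set (PAtom (piSig S))}
    (hsub : Istar ⊆ HB (piStarProg P)) (hW : WeakAS (piO O) (piStarProg P) Istar) :
    IsPiStarLift O P (embA ⁻¹' Istar ∩ HB P) Istar := by
  have hemb : ∀ x, embA x ∈ Istar ↔ x ∈ embA ⁻¹' Istar ∩ HB P := fun x =>
    ⟨fun hx => ⟨hx, mem_HB_of_embA_mem_HB (hsub hx)⟩, And.left⟩
  have hpi : ∀ p e, piPAtom p e ∈ Istar ↔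
      IsOminusPred P p ∧ (⟨p, e⟩ : PAtom S) ∉ embA ⁻¹' Istar ∩ HB P := fun p e => by
    rw [← hemb, Set.ext_iff.mp hW, piPAtom_mem_lfpGamma_iff]
  refine ⟨hemb, hpi, fun B => ?_⟩
  rw [Set.ext_iff.mp hW, piBAtom_mem_lfpGamma_iff]
  exact and_congr_right fun ⟨r, hr, hB⟩ => (satDL_piDL_iff hemb hpi ⟨r, hr, .inl hB⟩).not

end LiftInstances

end DLP

open DLP in
theorem stmt_8_general (S : DLSig) (O : Set (Fml S.fol)) (P : Set (Rule S)) :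
    (∀ I : Set (PAtom S), I ⊆ HB P → WeakAS O P I →
        WeakAS (piO O) (piStarProg P) (piStarSet O P I)) ∧
    (∀ Istar : Set (PAtom (piSig S)), Istar ⊆ HB (piStarProg P) →
        WeakAS (piO O) (piStarProg P) Istar →
        WeakAS O P ((embA ⁻¹' Istar) ∩ HB P)) :=
  ⟨fun I _ hI => (isPiStarLift_piStarSet I).weakAS_iff.mpr hI,
    fun _ hsub hW => (isPiStarLift_of_weakAS hsub hW).weakAS_iff.mp hW⟩

open DLP in
/-- The translation `π*` preserves weak answer sets:
(i) if `I` is a weak answer set of `K`, then `π*(I)` is a weak answer set of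
`π*(K)`; (ii) if `I*` is a weak answer set of `π*(K)`, then `I* ∩ HB_P` is a
weak answer set of `K`. -/
theorem stmt_8 (S : DLSig) (O : Set (Fml S.fol)) (P : Set (Rule S))
    (hOfin : O.Finite) (hPfin : P.Finite)
    (hO : ∀ φ ∈ O, OntoFml φ) (hQ : ∀ A ∈ DLatoms P, OntoFml A.Q) :
    (∀ I : Set (PAtom S), I ⊆ HB P → WeakAS O P I →
        WeakAS (piO O) (piStarProg P) (piStarSet O P I)) ∧
    (∀ Istar : Set (PAtom (piSig S)), Istar ⊆ HB (piStarProg P) →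
        WeakAS (piO O) (piStarProg P) Istar →
        WeakAS O P ((embA ⁻¹' Istar) ∩ HB P)) :=
  stmt_8_general S O P
end

section
/- Let K = (O, P) be a dl-program such that every dl-atom occurring in P is monotonic (DL_P^? = ∅), and let I ⊆ HB_P be a model of K. Then I is a strong answer set of K if and only if I is a strongly well-supported answer set of K. -/
/-!
A formalization of description logic programs (dl-programs) in the sense of
Eiter et al., over an abstract classical first-order semantics, together with
the translations π, π*, π', σ, τ, τ', τ* and the various answer-set semantics
(weak / strong answer sets, weakly / strongly well-supported answer sets) and
Reiter's default logic.
-/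

namespace DLP

attribute [local instance] Classical.propDecidable

end DLP
namespace DLP
noncomputable section
attribute [local instance] Classical.propDecidable

/-! ### The translation π (and π*) eliminating the constraint operator -/

variable {S : DLSig}

end
end DLP
namespace DLP
noncomputable section
attribute [local instance] Classical.propDecidable

variable {S : DLSig}

end
end DLP
namespace DLP
noncomputable section
attribute [local instance] Classical.propDecidable

variable {S : DLSig}

end
end DLP

open DLP in
/-- For a dl-program `K = (O, P)` with `DL_P^? = ∅` and a
model `I ⊆ HB_P` of `K`, `I` is a strong answer set of `K` iff `I` is a
strongly well-supported answer set of `K`. -/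
theorem stmt_18 (S : DLSig) (O : Set (Fml S.fol)) (P : Set (Rule S))
    (hOfin : O.Finite) (hPfin : P.Finite)
    (hO : ∀ φ ∈ O, OntoFml φ) (hQ : ∀ A ∈ DLatoms P, OntoFml A.Q)
    (hmon : ∀ A ∈ DLatoms P, Monotonic O P A)
    (I : Set (PAtom S)) (hI : I ⊆ HB P) (hmod : IsModel O P I) :
    StrongAS O P I ↔ SWS O P I := by
  classical
  have hmonB : ∀ r ∈ P, ∀ A : DLAtom S, (BElem.dl A ∈ r.pos ∨ BElem.dl A ∈ r.neg) →
      Monotonic O P A := fun r hr A hA => hmon A ⟨r, hr, hA⟩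
  have key : ∀ E : Set (PAtom S), E ⊆ I →
      gamma O (sReduct O P I) E = TK O P E I := by
    intro E hE
    have hup : ∀ b : BElem S, (∀ A, b = BElem.dl A → Monotonic O P A) →
        (UpSat O E I b ↔ SatB O E b) := by
      intro b hb
      cases b with
      | atom a => exact Iff.rfl
      | dl A =>
        have hA := hb A rfl
        constructor
        · intro h; exact h E (fun x hx => hx) hE
        · intro h F hEF hFI
          exact hA hEF (hFI.trans hI) h
    have hun : ∀ b : BElem S, (∀ A, b = BElem.dl A → Monotonic O P A) →
        (UpSatN O E I b ↔ ¬ SatB O I b) := by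
      intro b hb
      cases b with
      | atom a => exact Iff.rfl
      | dl A =>
        have hA := hb A rfl
        constructor
        · intro h hsat
          exact h ⟨I, hE, fun x hx => hx, hsat⟩
        · rintro h ⟨F, hEF, hFI, hF⟩
          exact h (hA hFI hI hF)
    ext a
    simp only [gamma, TK, Set.mem_setOf_eq]
    constructor
    · rintro ⟨r', ⟨r, hr, -, hneg, rfl⟩, hhead, hpos⟩
      refine ⟨r, hr, hhead, ?_, ?_⟩
      · intro b hb
        have hbmem : b ∈ List.filter (fun b => decide (match b with
            | .atom _ => True | .dl A => Monotonic O P A)) r.pos := by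
          apply List.mem_filter.mpr
          refine ⟨hb, ?_⟩
          cases b with
          | atom a => exact @decide_eq_true _ (Classical.propDecidable _) trivial
          | dl A => exact decide_eq_true (hmonB r hr A (Or.inl hb))
        exact (hup b (fun A hA => hmonB r hr A (Or.inl (hA ▸ hb)))).mpr (hpos b hbmem)
      · intro b hb
        exact (hun b (fun A hA => hmonB r hr A (Or.inr (hA ▸ hb)))).mpr (hneg b hb)
    · rintro ⟨r, hr, hhead, hpos, hneg⟩
      refine ⟨_, ⟨r, hr, ?_, ?_, rfl⟩, hhead, ?_⟩
      · intro A hA hn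
        exact absurd (hmonB r hr A (Or.inl hA)) hn
      · intro b hb
        exact (hun b (fun A hA => hmonB r hr A (Or.inr (hA ▸ hb)))).mp (hneg b hb)
      · intro b hb
        have hb' : b ∈ r.pos := (List.mem_filter.mp hb).1
        exact (hup b (fun A hA => hmonB r hr A (Or.inl (hA ▸ hb')))).mp (hpos b hb')
  constructor
  · intro hS
    have hb1 : ∀ k, gammaIter O (sReduct O P I) k ⊆ I := by
      intro k a ha
      rw [hS]
      exact Set.mem_iUnion.mpr ⟨k, ha⟩
    have heq : ∀ k, gammaIter O (sReduct O P I) k = TKiter O P I k := by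
      intro k
      induction k with
      | zero => rfl
      | succ k ih =>
        show gamma O (sReduct O P I) (gammaIter O (sReduct O P I) k)
            = TK O P (TKiter O P I k) I
        rw [key _ (hb1 k), ih]
    refine ⟨hmod, ?_⟩
    have : TKinf O P I = lfpGamma O (sReduct O P I) := by
      unfold TKinf lfpGamma
      exact Set.iUnion_congr fun k => (heq k).symm
    rw [this, ← hS]
  · rintro ⟨-, hW⟩
    have hb2 : ∀ k, TKiter O P I k ⊆ I := by
      intro k a ha
      rw [hW]
      exact Set.mem_iUnion.mpr ⟨k, ha⟩
    have heq : ∀ k, gammaIter O (sReduct O P I) k = TKiter O P I k := by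
      intro k
      induction k with
      | zero => rfl
      | succ k ih =>
        show gamma O (sReduct O P I) (gammaIter O (sReduct O P I) k)
            = TK O P (TKiter O P I k) I
        rw [ih, key _ (hb2 k)]
    show I = lfpGamma O (sReduct O P I)
    have h2 : lfpGamma O (sReduct O P I) = TKinf O P I := Set.iUnion_congr heq
    rw [h2]
    exact hW
end

section
/- Let K = (O, P) be a dl-program such that for every rule r of P, every dl-atom occurring in the negative body Neg(r) is monotonic, and let I ⊆ HB_P. Then I is a weakly well-supported answer set of K if and only if I is a strongly well-supported answer set of K. -/
/-!
A formalization of description logic programs (dl-programs) in the sense of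
Eiter et al., over an abstract classical first-order semantics, together with
the translations π, π*, π', σ, τ, τ', τ* and the various answer-set semantics
(weak / strong answer sets, weakly / strongly well-supported answer sets) and
Reiter's default logic.
-/

namespace DLP

attribute [local instance] Classical.propDecidable

end DLP
namespace DLP
noncomputable section
attribute [local instance] Classical.propDecidable

/-! ### The translation π (and π*) eliminating the constraint operator -/

variable {S : DLSig}

end
end DLP
namespace DLP
noncomputable section
attribute [local instance] Classical.propDecidable

variable {S : DLSig}

end
end DLP
namespace DLP
noncomputable section
attribute [local instance] Classical.propDecidable

variable {S : DLSig}

end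
end DLP

open DLP in
/-- For a dl-program `K = (O, P)` in which every dl-atom
occurring in a negative rule body is monotonic, and any `I ⊆ HB_P`, `I` is a
weakly well-supported answer set of `K` iff `I` is a strongly well-supported
answer set of `K`. -/
theorem stmt_19 (S : DLSig) (O : Set (Fml S.fol)) (P : Set (Rule S))
    (hOfin : O.Finite) (hPfin : P.Finite)
    (hO : ∀ φ ∈ O, OntoFml φ) (hQ : ∀ A ∈ DLatoms P, OntoFml A.Q)
    (hmon : ∀ r ∈ P, ∀ A : DLAtom S, BElem.dl A ∈ r.neg → Monotonic O P A)
    (I : Set (PAtom S)) (hI : I ⊆ HB P) :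
    WWS O P I ↔ SWS O P I := by
  have key : ∀ E : Set (PAtom S), E ⊆ I →
      TK O (negReduct O P I) E I = TK O P E I := by
    intro E hEI
    ext a
    constructor
    · rintro ⟨r', ⟨r, hr, hneg, rfl⟩, rfl, hpos, -⟩
      refine ⟨r, hr, rfl, hpos, ?_⟩
      intro b hb
      cases b with
      | atom c => exact hneg _ hb
      | dl A =>
        rintro ⟨F, hEF, hFI, hF⟩
        exact hneg _ hb (hmon r hr A hb hFI hI hF)
    · rintro ⟨r, hr, rfl, hpos, hneg⟩
      refine ⟨⟨r.head, r.pos, []⟩, ⟨r, hr, ?_, rfl⟩, rfl, hpos, by simp⟩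
      intro b hb
      cases b with
      | atom c => exact hneg _ hb
      | dl A =>
        intro hSat
        exact hneg _ hb ⟨I, hEI, subset_rfl, hSat⟩
  constructor
  · rintro ⟨hmod, hfix⟩
    refine ⟨hmod, ?_⟩
    have hiter : ∀ k, TKiter O (negReduct O P I) I k = TKiter O P I k := by
      intro k
      induction k with
      | zero => rfl
      | succ k ih =>
        have hsub : TKiter O (negReduct O P I) I k ⊆ I :=
          (Set.subset_iUnion (TKiter O (negReduct O P I) I) k).trans hfix.symm.subset
        show TK O (negReduct O P I) _ I = TK O P _ I
        rw [key _ hsub, ih]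
    calc I = TKinf O (negReduct O P I) I := hfix
      _ = TKinf O P I := by unfold TKinf; simp only [hiter]
  · rintro ⟨hmod, hfix⟩
    refine ⟨hmod, ?_⟩
    have hiter : ∀ k, TKiter O (negReduct O P I) I k = TKiter O P I k := by
      intro k
      induction k with
      | zero => rfl
      | succ k ih =>
        have hsub : TKiter O (negReduct O P I) I k ⊆ I :=
          ih ▸ (Set.subset_iUnion (TKiter O P I) k).trans hfix.symm.subset
        show TK O (negReduct O P I) _ I = TK O P _ I
        rw [key _ (ih ▸ hsub), ih]
    calc I = TKinf O P I := hfix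
      _ = TKinf O (negReduct O P I) I := by unfold TKinf; simp only [hiter]
end
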